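/- Let h ≤ d be natural numbers and let Ξ : ℝ^h → ℝ^d be an injective linear map with integer matrix entries of absolute value at most C, satisfying Ξ(ℤ^h) = ℤ^d ∩ Ξ(ℝ^h). Then there exists η > 0, depending only on h, d, C, such that: for all n, r ∈ ℤ^d, if the ℓ^∞-distance from n to the affine subspace Ξ(ℝ^h) + r is at most η, then n = Ξ(m) + r for a unique m ∈ ℤ^h. -/

import Mathlib

/-!
With `G = Xᵀ X`, the integer matrix `L = det G • 1 - X (adj G) Xᵀ` kills the column space of `X`,
and `L w = 0` forces `det G • w = X (adj G Xᵀ w)`, i.e. `w` lies in that real column space. If an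
integer vector `w = n - r` is within `η` of the column space, `L w` is an integer vector of norm
`< 1` once `η` is small (continuity of `L`), hence `L w = 0`; the lattice condition then gives an
integer preimage, unique by injectivity. Only finitely many `X` have entries bounded by `C`, so a
single `η` serves all of them.
-/

open Matrix Filter Topology

namespace Matrix

variable {m n : Type*}

lemma finite_setOf_forall_abs_le [Finite m] [Finite n] (C : ℤ) :
    {X : Matrix m n ℤ | ∀ i j, |X i j| ≤ C}.Finite :=
  (Set.Finite.pi fun _ => Set.Finite.pi fun _ => Set.finite_Icc (-C) C).subset
    fun _ hX i _ j _ => abs_le.1 (hX i j)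

variable [Fintype n]

lemma map_intCast_mulVec_intCast (X : Matrix m n ℤ) (v : n → ℤ) :
    X.map (Int.cast : ℤ → ℝ) *ᵥ (fun j => (v j : ℝ)) = fun i => ((X *ᵥ v) i : ℝ) :=
  funext fun i => (RingHom.map_mulVec (Int.castRingHom ℝ) X v i).symm

lemma map_intCast_mul {l p : Type*} (P : Matrix l n ℤ) (Q : Matrix n p ℤ) :
    (P * Q).map (Int.cast : ℤ → ℝ) = P.map (Int.cast : ℤ → ℝ) * Q.map (Int.cast : ℤ → ℝ) :=
  Matrix.map_mul (f := Int.castRingHom ℝ)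

lemma injective_mulVec_of_injective_map_intCast {X : Matrix m n ℤ}
    (hX : Function.Injective (X.map (Int.cast : ℤ → ℝ)).mulVec) :
    Function.Injective X.mulVec := by
  intro v w hvw
  have hcast := hX (a₁ := fun j => (v j : ℝ)) (a₂ := fun j => (w j : ℝ))
    (by rw [map_intCast_mulVec_intCast, map_intCast_mulVec_intCast, hvw])
  funext j
  exact_mod_cast congrFun hcast j

lemma det_transpose_mul_self_ne_zero [Fintype m] [DecidableEq n] {X : Matrix m n ℤ}
    (hX : Function.Injective (X.map (Int.cast : ℤ → ℝ)).mulVec) :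
    (Xᵀ * X).det ≠ 0 := by
  have hpos := (PosDef.conjTranspose_mul_self _ hX).det_pos
  rw [conjTranspose_eq_transpose_of_trivial, ← transpose_map, ← map_intCast_mul, ← Int.cast_det]
    at hpos
  exact_mod_cast hpos.ne'

lemma exists_pos_forall_mulVec_eq_zero_of_near_ker [Fintype m] (L : Matrix m n ℤ) :
    ∃ η > 0, ∀ (w : n → ℤ) (v : n → ℝ), L.map (Int.cast : ℤ → ℝ) *ᵥ v = 0 →
      (∀ i, |(w i : ℝ) - v i| ≤ η) → L *ᵥ w = 0 := by
  have hcont : Continuous (L.map (Int.cast : ℤ → ℝ) *ᵥ ·) := by fun_prop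
  obtain ⟨δ, hδ, hball⟩ := Metric.continuousAt_iff.1 (hcont.continuousAt (x := 0)) 1 one_pos
  refine ⟨δ / 2, half_pos hδ, fun w v hv hwv => ?_⟩
  set u : n → ℝ := (fun i => (w i : ℝ)) - v
  have hu : dist u 0 < δ := by
    rw [dist_zero_right]
    exact ((pi_norm_le_iff_of_nonneg (half_pos hδ).le).2 hwv).trans_lt (half_lt_self hδ)
  have hLu : L.map (Int.cast : ℤ → ℝ) *ᵥ u = fun i => ((L *ᵥ w) i : ℝ) := by
    rw [mulVec_sub, hv, sub_zero, map_intCast_mulVec_intCast]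
  have hsmall := hball hu
  rw [mulVec_zero, dist_zero_right, hLu] at hsmall
  funext i
  have : |((L *ᵥ w) i : ℝ)| < 1 := (norm_le_pi_norm (fun i => ((L *ᵥ w) i : ℝ)) i).trans_lt hsmall
  exact Int.abs_lt_one_iff.1 (by exact_mod_cast this)

lemma eventually_exists_mulVec_eq_of_near [Fintype m] [DecidableEq m] [DecidableEq n]
    (X : Matrix m n ℤ) (hX : Function.Injective (X.map (Int.cast : ℤ → ℝ)).mulVec) :
    ∀ᶠ η in 𝓝[>] (0 : ℝ), ∀ (w : m → ℤ) (y : n → ℝ),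
      (∀ i, |(w i : ℝ) - (X.map Int.cast *ᵥ y) i| ≤ η) →
      ∃ y' : n → ℝ, X.map (Int.cast : ℤ → ℝ) *ᵥ y' = fun i => (w i : ℝ) := by
  set G := Xᵀ * X
  set A := G.adjugate * Xᵀ
  have hAX : A * X = G.det • 1 := by rw [Matrix.mul_assoc, adjugate_mul]
  set L := G.det • (1 : Matrix m m ℤ) - X * A with hL
  have hLX : L * X = 0 := by
    rw [hL, Matrix.sub_mul, Matrix.mul_assoc, hAX, Matrix.smul_mul, Matrix.mul_smul,
      Matrix.one_mul, Matrix.mul_one, sub_self]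
  have hLXr : L.map (Int.cast : ℤ → ℝ) * X.map (Int.cast : ℤ → ℝ) = 0 := by
    rw [← map_intCast_mul, hLX, Matrix.map_zero _ Int.cast_zero]
  obtain ⟨η, hη, hker⟩ := exists_pos_forall_mulVec_eq_zero_of_near_ker L
  filter_upwards [Ioc_mem_nhdsGT hη] with η' hη' w y hnear
  have hLw : L *ᵥ w = 0 :=
    hker w _ (by rw [mulVec_mulVec, hLXr, zero_mulVec]) fun i => (hnear i).trans hη'.2
  have hw : G.det • w = X *ᵥ (A *ᵥ w) := by
    rwa [hL, sub_mulVec, smul_mulVec, one_mulVec, sub_eq_zero, ← mulVec_mulVec] at hLw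
  refine ⟨((G.det : ℝ)⁻¹) • fun j => ((A *ᵥ w) j : ℝ), ?_⟩
  rw [mulVec_smul, map_intCast_mulVec_intCast, ← hw]
  have hdet : (G.det : ℝ) ≠ 0 := by exact_mod_cast det_transpose_mul_self_ne_zero hX
  funext i
  simp [hdet]

end Matrix

theorem stmt_8_general (h d : ℕ) (C : ℤ) :
    ∃ η > (0 : ℝ), ∀ X : Matrix (Fin d) (Fin h) ℤ,
      (∀ i j, |X i j| ≤ C) →
      Function.Injective (X.map (Int.cast : ℤ → ℝ)).mulVec →
      ({n : Fin d → ℤ | ∃ m : Fin h → ℤ, X.mulVec m = n} =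
        {n : Fin d → ℤ | ∃ y : Fin h → ℝ,
          (X.map (Int.cast : ℤ → ℝ)).mulVec y = fun i => (n i : ℝ)}) →
      ∀ n r : Fin d → ℤ,
        (∃ y : Fin h → ℝ, ∀ i,
          |(n i : ℝ) - ((X.map (Int.cast : ℤ → ℝ)).mulVec y i + (r i : ℝ))| ≤ η) →
        ∃! m : Fin h → ℤ, n = X.mulVec m + r := by
  have hall := (eventually_all_finite (finite_setOf_forall_abs_le (m := Fin d) (n := Fin h) C)).2
    fun X _ => eventually_imp_distrib_left.2 X.eventually_exists_mulVec_eq_of_near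
  obtain ⟨η, hη, hpos⟩ := (hall.and self_mem_nhdsWithin).exists
  refine ⟨η, hpos, fun X hXC hinj hlat n r ⟨y, hy⟩ => ?_⟩
  obtain ⟨m, hm⟩ : n - r ∈ {n | ∃ m, X *ᵥ m = n} := by
    rw [hlat]
    exact hη X hXC hinj (n - r) y fun i => by simpa [sub_sub, add_comm] using hy i
  exact ⟨m, eq_add_of_sub_eq hm.symm, fun m' hm' =>
    injective_mulVec_of_injective_map_intCast hinj ((eq_sub_of_add_eq hm'.symm).trans hm.symm)⟩

theorem stmt_8 (h d : ℕ) (hhd : h ≤ d) (C : ℤ) (hC : 0 < C) :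
    ∃ η > (0 : ℝ), ∀ X : Matrix (Fin d) (Fin h) ℤ,
      (∀ i j, |X i j| ≤ C) →
      Function.Injective (X.map (Int.cast : ℤ → ℝ)).mulVec →
      ({n : Fin d → ℤ | ∃ m : Fin h → ℤ, X.mulVec m = n} =
        {n : Fin d → ℤ | ∃ y : Fin h → ℝ,
          (X.map (Int.cast : ℤ → ℝ)).mulVec y = fun i => (n i : ℝ)}) →
      ∀ n r : Fin d → ℤ,
        (∃ y : Fin h → ℝ, ∀ i,
          |(n i : ℝ) - ((X.map (Int.cast : ℤ → ℝ)).mulVec y i + (r i : ℝ))| ≤ η) →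
        ∃! m : Fin h → ℤ, n = X.mulVec m + r :=
  stmt_8_general h d C
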